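/- arXiv:2408.13346 — 2 statements merged into one kernel-verified Lean document; each statement's English description precedes it below -/
import Mathlib

section
/- For every set A of positive integers and every integer n > 0, the sum of the third elementary symmetric polynomial over partitions of n with parts in A satisfies e_3p_A(n) = (1/6) ( n^3 * p(n|A) - Σ_{k=1}^{n} ( 3n * σ_{2,A}(k) - 2 * σ_{3,A}(k) ) * p(n-k|A) ). -/
open Finset

/-- The finset of partitions of `n` all of whose parts lie in `A`. -/
def partitionsIn (A : Set ℕ) [DecidablePred (· ∈ A)] (n : ℕ) : Finset (Nat.Partition n) :=
  Finset.univ.filter fun π => ∀ i ∈ π.parts, i ∈ A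

/-- `p(n|A)`, the number of partitions of `n` with parts in `A`. -/
def pIn (A : Set ℕ) [DecidablePred (· ∈ A)] (n : ℕ) : ℕ := (partitionsIn A n).card

/-- `e_j p_A(n)`, the sum of the `j`-th elementary symmetric polynomial evaluated at the
parts over all partitions of `n` with parts in `A`. -/
def ejpIn (A : Set ℕ) [DecidablePred (· ∈ A)] (j n : ℕ) : ℕ :=
  ∑ π ∈ partitionsIn A n, π.parts.esymm j

/-- `σ_{j,A}(n)`, the sum of `d^j` over the divisors `d` of `n` lying in `A`. -/
def sigmaIn (A : Set ℕ) [DecidablePred (· ∈ A)] (j n : ℕ) : ℕ :=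
  ∑ d ∈ n.divisors.filter (· ∈ A), d ^ j

/-!
Summing Newton's identity `p₁³ + 2 p₃ = 6 e₃ + 3 p₁ p₂` over the partitions of `n`, where
`p₁ = n`, reduces the formula to the power sums:
`∑_λ ∑_i λ_i ^ j = ∑_{k ≤ n} σ_{j,A}(k) p(n - k | A)`.
For this, a part `d` occurring in `λ` is counted as `∑_{m ≥ 1} [m ≤ mult_d(λ)]`, and removing
`m` copies of `d` is a bijection from the partitions with `mult_d ≥ m` onto those of `n - m d`;
finally the pairs `(d, m)` are regrouped by `k = m d`.
-/

namespace Multiset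

variable {R : Type*} [CommSemiring R]

theorem esymm_cons_succ (a : R) (s : Multiset R) (k : ℕ) :
    (a ::ₘ s).esymm (k + 1) = s.esymm (k + 1) + a * s.esymm k := by
  simp [esymm, powersetCard_cons, map_map, sum_map_mul_left]

theorem esymm_one (s : Multiset R) : s.esymm 1 = s.sum := by
  simp [esymm, powersetCard_one, map_map]

theorem newton_identity_two (s : Multiset R) :
    s.sum ^ 2 = 2 * s.esymm 2 + (s.map (· ^ 2)).sum := by
  induction s using Multiset.induction with
  | empty => simp [esymm, powersetCard_zero_right]
  | cons a s ih =>
    calc (a ::ₘ s).sum ^ 2 = s.sum ^ 2 + 2 * a * s.sum + a ^ 2 := by rw [sum_cons]; ring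
      _ = 2 * (s.esymm 2 + a * s.esymm 1) + (a ^ 2 + (s.map (· ^ 2)).sum) := by
        rw [ih, esymm_one]; ring
      _ = _ := by rw [← esymm_cons_succ, map_cons, sum_cons]

theorem newton_identity_three (s : Multiset R) :
    s.sum ^ 3 + 2 * (s.map (· ^ 3)).sum = 6 * s.esymm 3 + 3 * s.sum * (s.map (· ^ 2)).sum := by
  induction s using Multiset.induction with
  | empty => simp [esymm, powersetCard_zero_right]
  | cons a s ih =>
    calc (a ::ₘ s).sum ^ 3 + 2 * ((a ::ₘ s).map (· ^ 3)).sum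
        = (s.sum ^ 3 + 2 * (s.map (· ^ 3)).sum) + 3 * a * s.sum ^ 2 + 3 * a ^ 2 * s.sum
            + 3 * a ^ 3 := by
          simp only [sum_cons, map_cons]; ring
      _ = 6 * (s.esymm 3 + a * s.esymm 2)
            + 3 * (a + s.sum) * (a ^ 2 + (s.map (· ^ 2)).sum) := by
        rw [ih, newton_identity_two]; ring
      _ = _ := by rw [← esymm_cons_succ, map_cons, sum_cons, sum_cons]

end Multiset

theorem Nat.Partition.count_mul_le {n : ℕ} (π : n.Partition) (d : ℕ) :
    π.parts.count d * d ≤ n := by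
  obtain ⟨t, ht⟩ := Multiset.le_iff_exists_add.mp
    (Multiset.le_count_iff_replicate_le.mp (le_refl (π.parts.count d)))
  have := congrArg Multiset.sum ht
  rw [π.parts_sum, Multiset.sum_add, Multiset.sum_replicate, smul_eq_mul] at this
  omega

theorem Nat.Partition.sum_map_pow_eq {n : ℕ} (π : n.Partition) (j : ℕ) :
    (π.parts.map (· ^ j)).sum = ∑ d ∈ Icc 1 n, π.parts.count d * d ^ j := by
  rw [Finset.sum_multiset_map_count]
  refine Finset.sum_subset (fun d hd => ?_) (fun d _ hd => ?_)
  · rw [Multiset.mem_toFinset] at hd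
    have := π.count_mul_le d
    have := Multiset.count_pos.mpr hd
    have := π.parts_pos hd
    simp only [mem_Icc]
    constructor <;> nlinarith
  · rw [Multiset.mem_toFinset] at hd
    simp [Multiset.count_eq_zero_of_notMem hd]

theorem sum_Icc_sum_divisors {M : Type*} [AddCommMonoid M] (n : ℕ) (f : ℕ → ℕ → M) :
    ∑ d ∈ Icc 1 n, ∑ m ∈ Icc 1 (n / d), f d (m * d) = ∑ k ∈ Icc 1 n, ∑ d ∈ k.divisors, f d k := by
  have multiples : ∀ d ∈ Icc 1 n,
      ∑ m ∈ Icc 1 (n / d), f d (m * d) = ∑ k ∈ Icc 1 n with d ∣ k, f d k := by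
    intro d hd
    have hd : 0 < d := (mem_Icc.mp hd).1
    refine sum_nbij' (· * d) (· / d) (fun m hm => ?_) (fun k hk => ?_) (fun m _ => ?_)
      (fun k hk => ?_) (fun _ _ => rfl)
    · simp only [mem_Icc, mem_filter, Nat.le_div_iff_mul_le hd] at hm ⊢
      exact ⟨⟨by nlinarith, hm.2⟩, dvd_mul_left d m⟩
    · simp only [mem_Icc, mem_filter, Nat.le_div_iff_mul_le hd] at hk ⊢
      obtain ⟨⟨hk1, hkn⟩, hdk⟩ := hk
      exact ⟨(one_mul d).trans_le (Nat.le_of_dvd hk1 hdk), (Nat.div_mul_le_self k d).trans hkn⟩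
    · exact Nat.mul_div_cancel m hd
    · exact Nat.div_mul_cancel (mem_filter.mp hk).2
  rw [sum_congr rfl multiples]
  refine sum_comm' fun d k => ?_
  simp only [mem_Icc, mem_filter, Nat.mem_divisors]
  constructor
  · rintro ⟨-, ⟨hk1, hkn⟩, hdk⟩
    exact ⟨⟨hdk, by omega⟩, hk1, hkn⟩
  · rintro ⟨⟨hdk, hk0⟩, hk1, hkn⟩
    have := Nat.le_of_dvd hk1 hdk
    have := Nat.pos_of_dvd_of_pos hdk hk1
    exact ⟨⟨by omega, by omega⟩, ⟨hk1, hkn⟩, hdk⟩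

section Partitions

variable {A : Set ℕ} [DecidablePred (· ∈ A)] {n : ℕ}

theorem mem_partitionsIn {π : n.Partition} : π ∈ partitionsIn A n ↔ ∀ i ∈ π.parts, i ∈ A := by
  simp [partitionsIn]

theorem card_filter_le_count_eq_pIn {d m : ℕ} (hdA : d ∈ A) (hd : 0 < d) (hmd : m * d ≤ n) :
    #{π ∈ partitionsIn A n | m ≤ π.parts.count d} = pIn A (n - m * d) := by
  have sum_replicate : (Multiset.replicate m d).sum = m * d := by simp
  refine card_bij'
    (fun π hπ => ⟨π.parts - .replicate m d,
      fun hi => π.parts_pos (Multiset.mem_of_le (Multiset.sub_le_self _ _) hi), by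
        have := congrArg Multiset.sum <| tsub_add_cancel_of_le <|
          Multiset.le_count_iff_replicate_le.mp (mem_filter.mp hπ).2
        rw [Multiset.sum_add, sum_replicate, π.parts_sum] at this
        omega⟩)
    (fun μ _ => ⟨μ.parts + .replicate m d,
      fun hi => (Multiset.mem_add.mp hi).elim μ.parts_pos
        fun h => (Multiset.eq_of_mem_replicate h).symm ▸ hd, by
        rw [Multiset.sum_add, sum_replicate, μ.parts_sum]; omega⟩)
    (fun π hπ => ?_) (fun μ hμ => ?_) (fun π hπ => Nat.Partition.ext ?_)
    (fun μ _ => Nat.Partition.ext (add_tsub_cancel_right _ _))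
  · simp only [mem_filter, mem_partitionsIn] at hπ ⊢
    exact fun i hi => hπ.1 i (Multiset.mem_of_le (Multiset.sub_le_self _ _) hi)
  · simp only [mem_filter, mem_partitionsIn, Multiset.mem_add, Multiset.count_add,
      Multiset.count_replicate_self] at hμ ⊢
    refine ⟨fun i hi => hi.elim (hμ i) fun h => (Multiset.eq_of_mem_replicate h).symm ▸ hdA, ?_⟩
    omega
  · exact tsub_add_cancel_of_le (Multiset.le_count_iff_replicate_le.mp (mem_filter.mp hπ).2)

theorem sum_count_eq_sum_pIn {d : ℕ} (hdA : d ∈ A) (hd : 0 < d) :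
    ∑ π ∈ partitionsIn A n, π.parts.count d = ∑ m ∈ Icc 1 (n / d), pIn A (n - m * d) := by
  have count_eq : ∀ π : n.Partition,
      π.parts.count d = ∑ m ∈ Icc 1 (n / d), if m ≤ π.parts.count d then 1 else 0 := by
    intro π
    have := (Nat.le_div_iff_mul_le hd).mpr (π.count_mul_le d)
    have : {m ∈ Icc 1 (n / d) | m ≤ π.parts.count d} = Icc 1 (π.parts.count d) := by
      ext m
      simp only [mem_filter, mem_Icc]
      omega
    simp [sum_boole, this]
  rw [sum_congr rfl fun π _ => count_eq π, sum_comm]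
  simp only [sum_boole, Nat.cast_id]
  refine sum_congr rfl fun m hm => ?_
  exact card_filter_le_count_eq_pIn hdA hd ((Nat.le_div_iff_mul_le hd).mp (mem_Icc.mp hm).2)

theorem sum_sum_map_pow_eq (j : ℕ) :
    ∑ π ∈ partitionsIn A n, (π.parts.map (· ^ j)).sum
      = ∑ k ∈ Icc 1 n, sigmaIn A j k * pIn A (n - k) := by
  have per_part : ∀ d ∈ Icc 1 n, ∑ π ∈ partitionsIn A n, π.parts.count d * d ^ j
      = ∑ m ∈ Icc 1 (n / d), if d ∈ A then d ^ j * pIn A (n - m * d) else 0 := by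
    intro d hd
    by_cases hdA : d ∈ A
    · simp only [if_pos hdA, ← mul_sum, mul_comm,
        sum_count_eq_sum_pIn hdA (mem_Icc.mp hd).1]
    · simp only [if_neg hdA, sum_const_zero]
      refine sum_eq_zero fun π hπ => ?_
      rw [Multiset.count_eq_zero_of_notMem fun h => hdA (mem_partitionsIn.mp hπ d h), zero_mul]
  simp only [Nat.Partition.sum_map_pow_eq]
  rw [sum_comm, sum_congr rfl per_part,
    sum_Icc_sum_divisors n fun d k => if d ∈ A then d ^ j * pIn A (n - k) else 0]
  simp only [sigmaIn, sum_mul, ← sum_filter]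

theorem pow_three_mul_pIn_add_two_mul_sum_sigmaIn :
    n ^ 3 * pIn A n + 2 * ∑ k ∈ Icc 1 n, sigmaIn A 3 k * pIn A (n - k)
      = 6 * ejpIn A 3 n + 3 * n * ∑ k ∈ Icc 1 n, sigmaIn A 2 k * pIn A (n - k) := by
  have newton : ∀ π ∈ partitionsIn A n, n ^ 3 + 2 * (π.parts.map (· ^ 3)).sum
      = 6 * π.parts.esymm 3 + 3 * n * (π.parts.map (· ^ 2)).sum := fun π _ => by
    simpa only [π.parts_sum] using π.parts.newton_identity_three
  have := sum_congr rfl newton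
  simp only [sum_add_distrib, sum_const, smul_eq_mul, ← mul_sum, sum_sum_map_pow_eq] at this
  rwa [mul_comm] at this

end Partitions

theorem e3pA_formula_general (A : Set ℕ) [DecidablePred (· ∈ A)] (n : ℕ) :
    (ejpIn A 3 n : ℚ) =
      (1 / 6) * ((n : ℚ) ^ 3 * (pIn A n : ℚ) -
        ∑ k ∈ Finset.Icc 1 n,
          (3 * (n : ℚ) * (sigmaIn A 2 k : ℚ) - 2 * (sigmaIn A 3 k : ℚ)) *
            (pIn A (n - k) : ℚ)) := by
  have h : ((n ^ 3 * pIn A n + 2 * ∑ k ∈ Icc 1 n, sigmaIn A 3 k * pIn A (n - k) : ℕ) : ℚ)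
      = (6 * ejpIn A 3 n + 3 * n * ∑ k ∈ Icc 1 n, sigmaIn A 2 k * pIn A (n - k) : ℕ) :=
    congrArg _ pow_three_mul_pIn_add_two_mul_sum_sigmaIn
  push_cast at h
  simp only [sub_mul, sum_sub_distrib, mul_assoc, ← mul_sum]
  linarith

theorem e3pA_formula (A : Set ℕ) [DecidablePred (· ∈ A)] (hA : ∀ a ∈ A, 0 < a)
    (n : ℕ) (hn : 0 < n) :
    (ejpIn A 3 n : ℚ) =
      (1 / 6) * ((n : ℚ) ^ 3 * (pIn A n : ℚ) -
        ∑ k ∈ Finset.Icc 1 n,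
          (3 * (n : ℚ) * (sigmaIn A 2 k : ℚ) - 2 * (sigmaIn A 3 k : ℚ)) *
            (pIn A (n - k) : ℚ)) :=
  e3pA_formula_general A n
end

section
/- For every integer n ≥ 2, e_2B(n) ≡ 1 (mod 2), i.e. the sum of e_2(λ) over all binary partitions λ of n is odd. -/
/-!
Modulo 2, `e₂` of a multiset of naturals is `C(o, 2)`, where `o` counts the odd entries; in a
binary partition the odd parts are the ones. Removing the ones and halving the remaining parts
maps the binary partitions of `n` with `n - 2k` ones bijectively onto the binary partitions of
`k`, so `e₂B(n) ≡ ∑ₖ B(k) C(n - 2k, 2)`. The same bijection gives `B(n) = ∑_{k ≤ n/2} B(k)`,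
hence `B(k)` is even for `k ≥ 2`, and only `C(n, 2) + C(n - 2, 2) = 2(n - 2 + C(n - 2, 2)) + 1`
survives.
-/

open Finset
open scoped Classical

/-- The finset of binary partitions of `n` (all parts are powers of `2`). -/
noncomputable def binaryPartitions (n : ℕ) : Finset (Nat.Partition n) :=
  Finset.univ.filter fun π => ∀ i ∈ π.parts, ∃ k : ℕ, i = 2 ^ k

/-- `B(n)`, the number of binary partitions of `n`. -/
noncomputable def Bbin (n : ℕ) : ℕ := (binaryPartitions n).card

/-- `e_j B(n)`, the sum of the `j`-th elementary symmetric polynomial evaluated at the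
parts over all binary partitions of `n`. -/
noncomputable def ejB (j n : ℕ) : ℕ := ∑ π ∈ binaryPartitions n, π.parts.esymm j

/-- `σ_{j,bin}(n) = Σ_{d ≥ 0, 2^d ∣ n} 2^{d·j}`. -/
def sigmaBin (j n : ℕ) : ℕ :=
  ∑ d ∈ (Finset.range (n + 1)).filter (fun d => 2 ^ d ∣ n), 2 ^ (d * j)

namespace Nat

theorem isPowerOfTwo.even_of_ne_one {p : ℕ} (hp : p.isPowerOfTwo) (h1 : p ≠ 1) : Even p := by
  obtain ⟨_ | k, rfl⟩ := hp
  · exact absurd rfl h1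
  · exact ⟨2 ^ k, by rw [pow_succ, mul_two]⟩

theorem isPowerOfTwo.odd_iff_eq_one {p : ℕ} (hp : p.isPowerOfTwo) : Odd p ↔ p = 1 :=
  ⟨fun hodd => by_contra fun h1 => Nat.not_even_iff_odd.2 hodd (hp.even_of_ne_one h1),
    fun h => h ▸ odd_one⟩

theorem isPowerOfTwo_two_mul_iff {m : ℕ} : (2 * m).isPowerOfTwo ↔ m.isPowerOfTwo := by
  refine ⟨fun ⟨k, hk⟩ => ?_, fun ⟨k, hk⟩ => ⟨k + 1, by rw [hk, pow_succ']⟩⟩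
  rcases k with _ | k
  · omega
  · exact ⟨k, by rw [pow_succ'] at hk; omega⟩

end Nat

namespace Multiset

theorem esymm_two_cons {R : Type*} [CommSemiring R] (a : R) (s : Multiset R) :
    (a ::ₘ s).esymm 2 = a * s.sum + s.esymm 2 := by
  rw [esymm, esymm, powersetCard_cons, map_add, sum_add, map_map, powersetCard_one, map_map,
    add_comm]
  simp only [Function.comp_def, prod_cons, prod_singleton]
  congr 1
  simpa using sum_map_mul_left (s := s) (a := a) (f := id)

theorem sum_modEq_card_filter_odd (s : Multiset ℕ) : s.sum ≡ (s.filter Odd).card [MOD 2] := by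
  induction s using Multiset.induction_on with
  | empty => rfl
  | cons a s ih =>
    rcases Nat.even_or_odd a with ha | ha
    · rw [filter_cons_of_neg _ (Nat.not_odd_iff_even.2 ha), sum_cons]
      simpa using Nat.ModEq.add (show a ≡ 0 [MOD 2] from Nat.even_iff.1 ha) ih
    · rw [filter_cons_of_pos _ ha, sum_cons, card_cons, add_comm _ 1]
      exact Nat.ModEq.add (show a ≡ 1 [MOD 2] from Nat.odd_iff.1 ha) ih

theorem esymm_two_modEq_choose_card_filter_odd (s : Multiset ℕ) :
    s.esymm 2 ≡ (s.filter Odd).card.choose 2 [MOD 2] := by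
  induction s using Multiset.induction_on with
  | empty => rfl
  | cons a s ih =>
    rw [esymm_two_cons]
    rcases Nat.even_or_odd a with ha | ha
    · rw [filter_cons_of_neg _ (Nat.not_odd_iff_even.2 ha)]
      simpa using (Nat.ModEq.mul_right s.sum (show a ≡ 0 [MOD 2] from Nat.even_iff.1 ha)).add ih
    · rw [filter_cons_of_pos _ ha, card_cons, Nat.choose_succ_succ', Nat.choose_one_right]
      simpa using (Nat.ModEq.mul (show a ≡ 1 [MOD 2] from Nat.odd_iff.1 ha)
        (sum_modEq_card_filter_odd s)).add ih

theorem card_filter_odd_eq_count_one {s : Multiset ℕ} (hs : ∀ i ∈ s, i.isPowerOfTwo) :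
    (s.filter Odd).card = s.count 1 := by
  rw [count_eq_card_filter_eq]
  congr 1
  exact filter_congr fun i hi => by rw [(hs i hi).odd_iff_eq_one, eq_comm]

def halveNonOnes (s : Multiset ℕ) : Multiset ℕ := (s.filter (· ≠ 1)).map (· / 2)

theorem replicate_count_one_add_map_two_mul_halveNonOnes {s : Multiset ℕ}
    (hs : ∀ i ∈ s, i ≠ 1 → Even i) :
    replicate (s.count 1) 1 + (halveNonOnes s).map (2 * ·) = s := by
  have hdouble : (halveNonOnes s).map (2 * ·) = s.filter (· ≠ 1) := by
    rw [halveNonOnes, map_map]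
    conv_rhs => rw [← map_id' (s.filter (· ≠ 1))]
    refine map_congr rfl fun i hi => ?_
    obtain ⟨his, hi1⟩ := mem_filter.1 hi
    exact Nat.two_mul_div_two_of_even (hs i his hi1)
  rw [hdouble, ← filter_eq', filter_add_not]

theorem halveNonOnes_replicate_one_add_map_two_mul (m : ℕ) (t : Multiset ℕ) :
    halveNonOnes (replicate m 1 + t.map (2 * ·)) = t := by
  have hones : (replicate m 1).filter (· ≠ 1) = 0 :=
    filter_eq_nil.2 fun i hi => by simp [eq_of_mem_replicate hi]
  have hdoubles : (t.map (2 * ·)).filter (· ≠ 1) = t.map (2 * ·) :=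
    filter_eq_self.2 fun i hi => by obtain ⟨j, -, rfl⟩ := mem_map.1 hi; omega
  rw [halveNonOnes, filter_add, hones, hdoubles, zero_add, map_map]
  conv_rhs => rw [← map_id' t]
  exact map_congr rfl fun j _ => by simp

theorem count_one_replicate_one_add_map_two_mul (m : ℕ) (t : Multiset ℕ) :
    (replicate m 1 + t.map (2 * ·)).count 1 = m := by
  rw [count_add, count_replicate_self, count_eq_zero.2 fun h => by
    obtain ⟨j, -, hj⟩ := mem_map.1 h; omega, add_zero]

end Multiset

namespace Nat.Partition

def halveNonOnes {n : ℕ} (π : n.Partition) : π.parts.halveNonOnes.sum.Partition where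
  parts := π.parts.halveNonOnes
  parts_pos hi := by
    obtain ⟨x, hx, rfl⟩ := Multiset.mem_map.1 hi
    obtain ⟨hxπ, hx1⟩ := Multiset.mem_filter.1 hx
    have := π.parts_pos hxπ
    omega
  parts_sum := rfl

def onesAddDouble {n k : ℕ} (σ : k.Partition) (h : 2 * k ≤ n) : n.Partition where
  parts := Multiset.replicate (n - 2 * k) 1 + σ.parts.map (2 * ·)
  parts_pos hi := by
    rcases Multiset.mem_add.1 hi with hi | hi
    · rw [Multiset.eq_of_mem_replicate hi]; exact Nat.one_pos
    · obtain ⟨x, hx, rfl⟩ := Multiset.mem_map.1 hi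
      have := σ.parts_pos hx
      omega
  parts_sum := by
    rw [Multiset.sum_add, Multiset.sum_replicate, Multiset.sum_map_mul_left, Multiset.map_id',
      σ.parts_sum, smul_eq_mul, mul_one]
    omega

theorem sigma_ext {p q : Σ n : ℕ, n.Partition} (h : p.2.parts = q.2.parts) : p = q := by
  obtain ⟨n, π⟩ := p
  obtain ⟨m, σ⟩ := q
  obtain rfl : n = m := by rw [← π.parts_sum, ← σ.parts_sum, h]
  exact congrArg _ (Nat.Partition.ext h)

end Nat.Partition

theorem mem_binaryPartitions {n : ℕ} {π : n.Partition} :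
    π ∈ binaryPartitions n ↔ ∀ i ∈ π.parts, i.isPowerOfTwo := by
  simp [binaryPartitions, Nat.isPowerOfTwo]

section binaryPartitions

variable {n k : ℕ} {π : n.Partition}

theorem count_one_add_two_mul_sum_halveNonOnes (hπ : π ∈ binaryPartitions n) :
    π.parts.count 1 + 2 * π.parts.halveNonOnes.sum = n := by
  conv_rhs => rw [← π.parts_sum, ← Multiset.replicate_count_one_add_map_two_mul_halveNonOnes
    fun i hi => (mem_binaryPartitions.1 hπ i hi).even_of_ne_one]
  rw [Multiset.sum_add, Multiset.sum_replicate, Multiset.sum_map_mul_left, Multiset.map_id',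
    smul_eq_mul, mul_one]

theorem halveNonOnes_mem_binaryPartitions (hπ : π ∈ binaryPartitions n) :
    π.halveNonOnes ∈ binaryPartitions _ := by
  refine mem_binaryPartitions.2 fun i hi => ?_
  obtain ⟨x, hx, rfl⟩ := Multiset.mem_map.1 hi
  obtain ⟨hxπ, hx1⟩ := Multiset.mem_filter.1 hx
  have hx2 := mem_binaryPartitions.1 hπ x hxπ
  rw [← Nat.isPowerOfTwo_two_mul_iff, Nat.two_mul_div_two_of_even (hx2.even_of_ne_one hx1)]
  exact hx2

theorem onesAddDouble_mem_binaryPartitions {σ : k.Partition} (hσ : σ ∈ binaryPartitions k)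
    (h : 2 * k ≤ n) : σ.onesAddDouble h ∈ binaryPartitions n := by
  refine mem_binaryPartitions.2 fun i hi => ?_
  rcases Multiset.mem_add.1 hi with hi | hi
  · rw [Multiset.eq_of_mem_replicate hi]; exact Nat.isPowerOfTwo_one
  · obtain ⟨x, hx, rfl⟩ := Multiset.mem_map.1 hi
    exact Nat.isPowerOfTwo_two_mul_iff.2 (mem_binaryPartitions.1 hσ x hx)

theorem esymm_two_modEq_choose_count_one (hπ : π ∈ binaryPartitions n) :
    π.parts.esymm 2 ≡ (π.parts.count 1).choose 2 [MOD 2] := by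
  simpa only [Multiset.card_filter_odd_eq_count_one (mem_binaryPartitions.1 hπ)] using
    π.parts.esymm_two_modEq_choose_card_filter_odd

end binaryPartitions

theorem sum_binaryPartitions_count_one {M : Type*} [AddCommMonoid M] (n : ℕ) (f : ℕ → M) :
    ∑ π ∈ binaryPartitions n, f (π.parts.count 1) =
      ∑ k ∈ range (n / 2 + 1), Bbin k • f (n - 2 * k) := by
  simp_rw [Bbin, ← sum_const, sum_sigma']
  refine sum_bij' (fun π _ => ⟨_, π.halveNonOnes⟩)
    (fun p hp => p.2.onesAddDouble (by have := mem_range.1 (mem_sigma.1 hp).1; omega))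
    (fun π hπ => ?_) (fun p hp => ?_) (fun π hπ => ?_) (fun p _ => ?_) (fun π hπ => ?_)
  · have := count_one_add_two_mul_sum_halveNonOnes hπ
    exact mem_sigma.2 ⟨mem_range.2 (by dsimp only; omega), halveNonOnes_mem_binaryPartitions hπ⟩
  · exact onesAddDouble_mem_binaryPartitions (mem_sigma.1 hp).2 _
  · have hcount := count_one_add_two_mul_sum_halveNonOnes hπ
    refine Nat.Partition.ext ?_
    change Multiset.replicate (n - 2 * _) 1 + _ = _
    rw [show n - 2 * π.parts.halveNonOnes.sum = π.parts.count 1 by omega]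
    exact Multiset.replicate_count_one_add_map_two_mul_halveNonOnes
      fun i hi => (mem_binaryPartitions.1 hπ i hi).even_of_ne_one
  · exact Nat.Partition.sigma_ext (Multiset.halveNonOnes_replicate_one_add_map_two_mul _ _)
  · have := count_one_add_two_mul_sum_halveNonOnes hπ
    dsimp only
    congr 1
    omega

theorem Bbin_zero : Bbin 0 = 1 := by
  rw [Bbin, binaryPartitions, filter_true_of_mem fun π _ i hi => by simp at hi]
  rfl

theorem Bbin_one : Bbin 1 = 1 := by
  rw [Bbin, binaryPartitions, filter_true_of_mem fun π _ i hi => by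
    rw [Nat.Partition.partition_one_parts, Multiset.mem_singleton] at hi
    exact ⟨0, hi⟩]
  rfl

theorem Bbin_eq_sum_range (n : ℕ) : Bbin n = ∑ k ∈ range (n / 2 + 1), Bbin k := by
  have h := sum_binaryPartitions_count_one n fun _ => (1 : ℕ)
  simp only [smul_eq_mul, mul_one, ← card_eq_sum_ones] at h
  exact h

theorem even_Bbin {n : ℕ} (hn : 2 ≤ n) : Even (Bbin n) := by
  induction n using Nat.strong_induction_on with
  | _ n ih =>
    obtain ⟨r, hr⟩ : ∃ r, n / 2 + 1 = r + 2 := ⟨n / 2 - 1, by omega⟩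
    rw [Bbin_eq_sum_range, hr, sum_range_succ', sum_range_succ', Bbin_zero, Bbin_one, add_assoc]
    refine (even_sum _ fun k hk => ih _ ?_ (by omega)).add even_two
    have := mem_range.1 hk
    omega

theorem choose_two_add_two_add_choose_two (m : ℕ) :
    (m + 2).choose 2 + m.choose 2 = 2 * (m + m.choose 2) + 1 := by
  have h₁ : (m + 2).choose 2 = (m + 1) + (m + 1).choose 2 := by
    rw [Nat.choose_succ_succ' (m + 1) 1, Nat.choose_one_right]
  have h₂ : (m + 1).choose 2 = m + m.choose 2 := by
    rw [Nat.choose_succ_succ' m 1, Nat.choose_one_right]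
  omega

theorem e2B_odd (n : ℕ) (hn : 2 ≤ n) : ejB 2 n ≡ 1 [MOD 2] := by
  obtain ⟨m, rfl⟩ : ∃ m, n = m + 2 := ⟨n - 2, by omega⟩
  obtain ⟨r, hr⟩ : ∃ r, (m + 2) / 2 + 1 = r + 2 := ⟨m / 2, by omega⟩
  obtain ⟨t, ht⟩ : Even (∑ k ∈ range r, Bbin (k + 2) * (m + 2 - 2 * (k + 2)).choose 2) :=
    even_sum _ fun k _ => (even_Bbin (by omega)).mul_right _
  calc ejB 2 (m + 2)
      ≡ ∑ π ∈ binaryPartitions (m + 2), (π.parts.count 1).choose 2 [MOD 2] :=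
        Nat.ModEq.sum fun _ => esymm_two_modEq_choose_count_one
    _ = ∑ k ∈ range (r + 2), Bbin k * (m + 2 - 2 * k).choose 2 := by
      rw [sum_binaryPartitions_count_one (f := fun c => c.choose 2), hr]
      simp only [smul_eq_mul]
    _ = (t + t) + ((m + 2).choose 2 + m.choose 2) := by
      rw [sum_range_succ', sum_range_succ', ht, Bbin_zero, Bbin_one]
      simp only [one_mul, mul_zero, Nat.sub_zero, Nat.add_sub_cancel]
      ring
    _ ≡ 1 [MOD 2] := by
      rw [choose_two_add_two_add_choose_two]
      unfold Nat.ModEq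
      omega
end
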